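/- Let m ≥ 2 be a natural number. Every homoclinic solution u of ü − u + u^m = 0 is symmetric about a point z₀ at which u̇(z₀) = 0 and ü(z₀) = u(z₀) − u(z₀)^m ≠ 0; in other words, the homoclinic orbit intersects the symmetric section {(u, u̇) ∈ ℝ² : u̇ = 0} transversally (the vector field at the intersection point is not tangent to the section). -/

import Mathlib

open Filter Topology Set

/-- A homoclinic solution of the travelling-wave generalised KdV equation
`ü − u + u^m = 0`: a nonconstant `C²` solution with `u, u̇ → 0` as `z → ±∞`. -/
def IsHomoclinicKdV (m : ℕ) (u : ℝ → ℝ) : Prop :=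
  ContDiff ℝ 2 u ∧
  (∀ z : ℝ, deriv (deriv u) z - u z + (u z) ^ m = 0) ∧
  (∃ z w : ℝ, u z ≠ u w) ∧
  Tendsto u atTop (𝓝 0) ∧ Tendsto u atBot (𝓝 0) ∧
  Tendsto (deriv u) atTop (𝓝 0) ∧ Tendsto (deriv u) atBot (𝓝 0)

/-!
The equation is Newton's equation `ü = V'(u)` with `V(x) = x²/2 - x^(m+1)/(m+1)`, so the energy
`u̇²/2 - V(u)` is conserved, and it vanishes on a homoclinic orbit. A nonconstant homoclinic `u`
attains a nonzero extremum at some `z₀`, where `u̇(z₀) = 0`. Reversibility of the equation and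
uniqueness for the (locally Lipschitz) phase-plane system make `u` symmetric about `z₀`. Zero
energy at `z₀` gives `u(z₀)^(m-1) = (m+1)/2 ≠ 1`, so `u(z₀) - u(z₀)^m ≠ 0`.
-/

theorem ContDiff.eq_of_hasDerivAt_of_eq {E : Type*} [NormedAddCommGroup E] [NormedSpace ℝ E]
    {v : E → E} (hv : ContDiff ℝ 1 v) {f g : ℝ → E}
    (hf : ∀ t, HasDerivAt f (v (f t)) t) (hg : ∀ t, HasDerivAt g (v (g t)) t)
    {t₀ : ℝ} (heq : f t₀ = g t₀) : f = g := by
  ext t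
  obtain ⟨a, b, ht, ht₀⟩ : ∃ a b, t ∈ Ioo a b ∧ t₀ ∈ Ioo a b := by
    use min t t₀ - 1, max t t₀ + 1
    grind
  -- `v` is only locally Lipschitz, but the two curves stay in a compact set over `[a, b]`.
  set s := f '' Icc a b ∪ g '' Icc a b
  have hs : IsCompact s :=
    (isCompact_Icc.image (continuous_iff_continuousAt.2 fun t ↦ (hf t).continuousAt)).union
      (isCompact_Icc.image (continuous_iff_continuousAt.2 fun t ↦ (hg t).continuousAt))
  obtain ⟨K, hK⟩ := hv.locallyLipschitz.locallyLipschitzOn.exists_lipschitzOnWith_of_compact hs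
  refine ODE_solution_unique_of_mem_Ioo (v := fun _ ↦ v) (s := fun _ ↦ s)
    (fun _ _ ↦ hK) ht₀ (fun τ hτ ↦ ⟨hf τ, ?_⟩) (fun τ hτ ↦ ⟨hg τ, ?_⟩) heq ht
  · exact Or.inl (mem_image_of_mem f (Ioo_subset_Icc_self hτ))
  · exact Or.inr (mem_image_of_mem g (Ioo_subset_Icc_self hτ))

section Newton

variable {f F u u' : ℝ → ℝ}

theorem newton_energy_eq (hF : ∀ x, HasDerivAt F (f x) x) (hu : ∀ z, HasDerivAt u (u' z) z)
    (hu' : ∀ z, HasDerivAt u' (f (u z)) z) (z w : ℝ) :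
    u' z ^ 2 / 2 - F (u z) = u' w ^ 2 / 2 - F (u w) := by
  have hE : ∀ z, HasDerivAt (fun z ↦ u' z ^ 2 / 2 - F (u z)) 0 z := fun z ↦ by
    refine ((((hu' z).fun_pow 2).div_const 2).fun_sub ((hF (u z)).comp z (hu z))).congr_deriv ?_
    push_cast
    ring
  exact is_const_of_deriv_eq_zero (fun z ↦ (hE z).differentiableAt) (fun z ↦ (hE z).deriv) z w

theorem newton_energy_eq_of_tendsto (hF : ∀ x, HasDerivAt F (f x) x)
    (hu : ∀ z, HasDerivAt u (u' z) z) (hu' : ∀ z, HasDerivAt u' (f (u z)) z)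
    {l : Filter ℝ} [l.NeBot] {a : ℝ} (hl : Tendsto u l (𝓝 a)) (hl' : Tendsto u' l (𝓝 0))
    (z : ℝ) : u' z ^ 2 / 2 - F (u z) = -F a := by
  have hlim : Tendsto (fun w ↦ u' w ^ 2 / 2 - F (u w)) l (𝓝 (0 ^ 2 / 2 - F a)) :=
    ((hl'.pow 2).div_const 2).sub (((hF a).continuousAt.tendsto).comp hl)
  simp_rw [newton_energy_eq hF hu hu' _ z] at hlim
  simpa using tendsto_const_nhds_iff.mp hlim

-- Reversibility: `t ↦ (u (z₀ - t), -u' (z₀ - t))` solves the same first-order system as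
-- `t ↦ (u (z₀ + t), u' (z₀ + t))`, and the two agree at `t = 0`.
theorem newton_symmetric_of_eq_zero (hf : ContDiff ℝ 1 f) (hu : ∀ z, HasDerivAt u (u' z) z)
    (hu' : ∀ z, HasDerivAt u' (f (u z)) z) {z₀ : ℝ} (h₀ : u' z₀ = 0) (z : ℝ) :
    u (z₀ + z) = u (z₀ - z) := by
  have hv : ContDiff ℝ 1 fun p : ℝ × ℝ ↦ (p.2, f p.1) := contDiff_snd.prodMk (hf.comp contDiff_fst)
  have hfwd : ∀ t, HasDerivAt (fun t ↦ (u (z₀ + t), u' (z₀ + t)))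
      ((u' (z₀ + t), f (u (z₀ + t)))) t := fun t ↦ by
    have hs := (hasDerivAt_id t).const_add z₀
    simpa using ((hu _).comp t hs).prodMk ((hu' _).comp t hs)
  have hbwd : ∀ t, HasDerivAt (fun t ↦ (u (z₀ - t), -u' (z₀ - t)))
      ((-u' (z₀ - t), f (u (z₀ - t)))) t := fun t ↦ by
    have hs := (hasDerivAt_id t).const_sub z₀
    simpa using ((hu _).comp t hs).prodMk ((hu' _).comp t hs).neg
  have := hv.eq_of_hasDerivAt_of_eq hfwd hbwd (t₀ := 0) (by simp [h₀])
  exact congrArg Prod.fst (congrFun this z)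

end Newton

theorem Continuous.exists_isLocalExtr_ne_zero {β : Type*} [TopologicalSpace β] {u : β → ℝ}
    (hu : Continuous u) (hlim : Tendsto u (cocompact β) (𝓝 0)) {z₁ : β} (h : u z₁ ≠ 0) :
    ∃ z₀, IsLocalExtr u z₀ ∧ u z₀ ≠ 0 := by
  rcases h.lt_or_gt with hneg | hpos
  · obtain ⟨z₀, hmin⟩ := hu.exists_forall_le' z₁ ((hlim.eventually_const_lt hneg).mono
      fun _ ↦ le_of_lt)
    exact ⟨z₀, .inl (.of_forall hmin), ((hmin z₁).trans_lt hneg).ne⟩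
  · obtain ⟨z₀, hmax⟩ := hu.exists_forall_ge' z₁ ((hlim.eventually_lt_const hpos).mono
      fun _ ↦ le_of_lt)
    exact ⟨z₀, .inr (.of_forall hmax), (hpos.trans_le (hmax z₁)).ne'⟩

noncomputable def kdvPotential (m : ℕ) (x : ℝ) : ℝ := x ^ 2 / 2 - x ^ (m + 1) / (m + 1)

theorem hasDerivAt_kdvPotential (m : ℕ) (x : ℝ) : HasDerivAt (kdvPotential m) (x - x ^ m) x := by
  refine (((hasDerivAt_pow 2 x).div_const 2).fun_sub
    ((hasDerivAt_pow (m + 1) x).div_const (m + 1))).congr_deriv ?_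
  field_simp
  push_cast
  ring

theorem kdvPotential_zero (m : ℕ) : kdvPotential m 0 = 0 := by simp [kdvPotential]

theorem sub_pow_ne_zero_of_kdvPotential_eq_zero {m : ℕ} (hm : 2 ≤ m) {x : ℝ} (hx : x ≠ 0)
    (h : kdvPotential m x = 0) : x - x ^ m ≠ 0 := by
  intro hfix
  have hm' : (2 : ℝ) ≤ m := by exact_mod_cast hm
  have hpow : x ^ (m + 1) = x ^ 2 := by rw [pow_succ, ← sub_eq_zero.mp hfix, sq]
  rw [kdvPotential, hpow] at h
  have hx2 : 0 < x ^ 2 := by positivity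
  have hdeg : x ^ 2 * (m - 1) = 0 := by field_simp at h; linarith
  nlinarith

/-- Every homoclinic solution of `ü − u + u^m = 0` (`m ≥ 2`) is symmetric about a
point `z₀` at which `u̇(z₀) = 0` and `ü(z₀) = u(z₀) − u(z₀)^m ≠ 0`; i.e. the
homoclinic orbit intersects the symmetric section `{u̇ = 0}` transversally. -/
theorem kdv_homoclinic_transverse (m : ℕ) (hm : 2 ≤ m)
    (u : ℝ → ℝ) (hu : IsHomoclinicKdV m u) :
    ∃ z₀ : ℝ,
      (∀ z : ℝ, u (z₀ + z) = u (z₀ - z)) ∧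
      deriv u z₀ = 0 ∧
      u z₀ - (u z₀) ^ m ≠ 0 := by
  obtain ⟨hC2, hode, ⟨a, b, hab⟩, hT, hB, hT', -⟩ := hu
  obtain ⟨hdiff, -, hC1⟩ := contDiff_succ_iff_deriv.mp (show ContDiff ℝ (1 + 1) u from hC2)
  have hu : ∀ z, HasDerivAt u (deriv u z) z := fun z ↦ (hdiff z).hasDerivAt
  have hu' : ∀ z, HasDerivAt (deriv u) (u z - u z ^ m) z := fun z ↦ by
    simpa [show deriv (deriv u) z = u z - u z ^ m by linarith [hode z]] using
      ((hC1.differentiable one_ne_zero) z).hasDerivAt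
  obtain ⟨z₁, hz₁⟩ : ∃ z₁, u z₁ ≠ 0 := by
    by_contra! h
    exact hab (by rw [h a, h b])
  have hlim : Tendsto u (cocompact ℝ) (𝓝 0) := by
    rw [cocompact_eq_atBot_atTop]
    exact hB.sup hT
  obtain ⟨z₀, hext, hz₀⟩ := hdiff.continuous.exists_isLocalExtr_ne_zero hlim hz₁
  have hcrit : deriv u z₀ = 0 := hext.deriv_eq_zero
  refine ⟨z₀, newton_symmetric_of_eq_zero (f := fun x ↦ x - x ^ m) (by fun_prop) hu hu' hcrit,
    hcrit, sub_pow_ne_zero_of_kdvPotential_eq_zero hm hz₀ ?_⟩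
  have := newton_energy_eq_of_tendsto (hasDerivAt_kdvPotential m) hu hu' hT hT' z₀
  simpa [hcrit, kdvPotential_zero] using this
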